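/- arXiv:1708.05855 — 3 statements merged into one kernel-verified Lean document; each statement's English description precedes it below -/
import Mathlib

section
/- Let −π < θ_1 < θ_2 < ⋯ < θ_n ≤ π with n ≥ 3, θ_{n+1} := θ_1 + 2π, and let f : ℝ → ℝ be twice continuously differentiable on (0,∞) with f″(x) > 0 for all x > 0 and f(1) = 0. Then for every z in the open unit disk, the reduced f-divergence distance satisfies d_f(z) = 0 if and only if z = 0; equivalently, if φ_j(z) = (θ_{j+1} − θ_j)/(2π) for all j = 1,…,n, then z = 0. -/
/-- The Poisson kernel of the unit disk:
`P(z,θ) = (1/(2π)) · (1 − |z|²)/|z − e^{iθ}|²`. -/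
noncomputable def poisson (z : ℂ) (θ : ℝ) : ℝ :=
  (1 / (2 * Real.pi)) * (1 - ‖z‖ ^ 2) /
    ‖z - Complex.exp (θ * Complex.I)‖ ^ 2

/-!
Integrating the Poisson kernel through the explicit primitive `t + 2 arg (1 - z e^{-it})` shows
that the reduced coordinates of `z` are positive and sum to `1`, like those of the origin. The
equality case of Jensen's inequality for the strictly convex `f` turns `d_f(z) = 0` into
`φ_j(z) = φ_j(0)` for every `j`. On each of the first three arcs, Rolle's theorem applied to the
primitive minus `t` then gives a point `e^{it}` with `2π P(z,t) = 1`, that is, a point of the unit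
circle on the line `Re (z̄ w) = |z|²`. Three distinct such points force `z = 0`.
-/

open Real

lemma real_inner_exp_mul_I (z : ℂ) (t : ℝ) :
    inner ℝ z (Complex.exp (t * Complex.I)) = z.re * cos t + z.im * sin t := by
  simp only [Complex.inner, Complex.mul_re, Complex.exp_ofReal_mul_I_re,
    Complex.exp_ofReal_mul_I_im, Complex.conj_re, Complex.conj_im]
  ring

lemma norm_sub_exp_mul_I_sq (z : ℂ) (t : ℝ) :
    ‖z - Complex.exp (t * Complex.I)‖ ^ 2 = 1 + ‖z‖ ^ 2 - 2 * (z.re * cos t + z.im * sin t) := by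
  rw [norm_sub_sq_real, Complex.norm_exp_ofReal_mul_I, real_inner_exp_mul_I]
  ring

lemma re_mul_cos_add_im_mul_sin_le (z : ℂ) (t : ℝ) : z.re * cos t + z.im * sin t ≤ ‖z‖ := by
  have := real_inner_le_norm z (Complex.exp (t * Complex.I))
  rwa [real_inner_exp_mul_I, Complex.norm_exp_ofReal_mul_I, mul_one] at this

lemma sub_exp_mul_I_ne_zero {z : ℂ} (hz : ‖z‖ < 1) (t : ℝ) :
    z - Complex.exp (t * Complex.I) ≠ 0 := by
  rw [sub_ne_zero]
  rintro rfl
  simp at hz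

lemma one_add_sq_norm_sub_ne_zero {z : ℂ} (hz : ‖z‖ < 1) (t : ℝ) :
    1 + ‖z‖ ^ 2 - 2 * (z.re * cos t + z.im * sin t) ≠ 0 := by
  rw [← norm_sub_exp_mul_I_sq]
  exact pow_ne_zero 2 (norm_ne_zero_iff.2 (sub_exp_mul_I_ne_zero hz t))

lemma poisson_zero (t : ℝ) : poisson 0 t = 1 / (2 * π) := by
  simp [poisson]

lemma two_pi_mul_poisson (z : ℂ) (t : ℝ) :
    2 * π * poisson z t = (1 - ‖z‖ ^ 2) / (1 + ‖z‖ ^ 2 - 2 * (z.re * cos t + z.im * sin t)) := by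
  rw [poisson, norm_sub_exp_mul_I_sq]
  field_simp

lemma two_pi_mul_poisson_eq_one_iff {z : ℂ} (hz : ‖z‖ < 1) (t : ℝ) :
    2 * π * poisson z t = 1 ↔ z.re * cos t + z.im * sin t = ‖z‖ ^ 2 := by
  rw [two_pi_mul_poisson, div_eq_one_iff_eq (one_add_sq_norm_sub_ne_zero hz t)]
  constructor <;> intro h <;> linarith

lemma poisson_pos {z : ℂ} (hz : ‖z‖ < 1) (t : ℝ) : 0 < poisson z t := by
  have hne := sub_exp_mul_I_ne_zero hz t
  have hz2 : 0 < 1 - ‖z‖ ^ 2 := sub_pos.2 (pow_lt_one₀ (norm_nonneg z) hz two_ne_zero)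
  have := pi_pos
  unfold poisson
  positivity

lemma continuous_poisson {z : ℂ} (hz : ‖z‖ < 1) : Continuous (poisson z) :=
  Continuous.div (by fun_prop) (by fun_prop) fun t =>
    pow_ne_zero 2 (norm_ne_zero_iff.2 (sub_exp_mul_I_ne_zero hz t))

/-- `2 arctan (⋯)` is `2 arg (1 - z e^{-it})`, a continuous branch since `1 - z e^{-it}` has
positive real part. -/
noncomputable def poissonPrimitive (z : ℂ) (t : ℝ) : ℝ :=
  t + 2 * arctan ((z.re * sin t - z.im * cos t) / (1 - (z.re * cos t + z.im * sin t)))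

lemma hasDerivAt_poissonPrimitive {z : ℂ} (hz : ‖z‖ < 1) (t : ℝ) :
    HasDerivAt (poissonPrimitive z) (2 * π * poisson z t) t := by
  have hN : HasDerivAt (fun t => z.re * sin t - z.im * cos t)
      (z.re * cos t + z.im * sin t) t :=
    (((hasDerivAt_sin t).const_mul z.re).sub
      ((hasDerivAt_cos t).const_mul z.im)).congr_deriv (by ring)
  have hD : HasDerivAt (fun t => 1 - (z.re * cos t + z.im * sin t))
      (z.re * sin t - z.im * cos t) t :=
    ((((hasDerivAt_cos t).const_mul z.re).add
      ((hasDerivAt_sin t).const_mul z.im)).const_sub 1).congr_deriv (by ring)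
  have hD0 : 1 - (z.re * cos t + z.im * sin t) ≠ 0 :=
    (sub_pos.2 ((re_mul_cos_add_im_mul_sin_le z t).trans_lt hz)).ne'
  have hden := one_add_sq_norm_sub_ne_zero hz t
  have hnorm :
      ‖z‖ ^ 2 = (z.re * sin t - z.im * cos t) ^ 2 + (z.re * cos t + z.im * sin t) ^ 2 := by
    rw [Complex.sq_norm, Complex.normSq_apply]
    linear_combination -(z.re ^ 2 + z.im ^ 2) * sin_sq_add_cos_sq t
  refine ((hasDerivAt_id t).add (((hN.div hD hD0).arctan).const_mul 2)).congr_deriv ?_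
  simp only [Pi.div_apply]
  rw [two_pi_mul_poisson, hnorm]
  rw [hnorm] at hden
  generalize z.re * sin t - z.im * cos t = N at *
  generalize z.re * cos t + z.im * sin t = S at *
  field_simp
  ring

lemma poissonPrimitive_add_two_pi (z : ℂ) (t : ℝ) :
    poissonPrimitive z (t + 2 * π) = poissonPrimitive z t + 2 * π := by
  simp only [poissonPrimitive, sin_add_two_pi, cos_add_two_pi]
  ring

lemma integral_poisson {z : ℂ} (hz : ‖z‖ < 1) (u v : ℝ) :
    ∫ t in u..v, poisson z t = (poissonPrimitive z v - poissonPrimitive z u) / (2 * π) := by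
  rw [eq_div_iff two_pi_pos.ne', ← intervalIntegral.integral_mul_const]
  refine intervalIntegral.integral_eq_sub_of_hasDerivAt (fun t _ => ?_)
    (((continuous_poisson hz).mul continuous_const).intervalIntegrable u v)
  simpa only [mul_comm] using hasDerivAt_poissonPrimitive hz t

lemma integral_poisson_zero (u v : ℝ) : ∫ t in u..v, poisson 0 t = (v - u) / (2 * π) := by
  simp only [poisson_zero, intervalIntegral.integral_const, smul_eq_mul]
  ring

lemma integral_poisson_pos {z : ℂ} (hz : ‖z‖ < 1) {u v : ℝ} (huv : u < v) :
    0 < ∫ t in u..v, poisson z t :=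
  intervalIntegral.intervalIntegral_pos_of_pos ((continuous_poisson hz).intervalIntegrable u v)
    (poisson_pos hz) huv

lemma sum_integral_poisson_eq_one {z : ℂ} (hz : ‖z‖ < 1) {n : ℕ} {u : ℕ → ℝ}
    (hu : u (n + 1) = u 1 + 2 * π) :
    ∑ j ∈ Finset.Icc 1 n, ∫ t in u j..u (j + 1), poisson z t = 1 := by
  rw [← Finset.Ico_add_one_right_eq_Icc, intervalIntegral.sum_integral_adjacent_intervals_Ico
    (by omega) fun k _ => (continuous_poisson hz).intervalIntegrable _ _, integral_poisson hz, hu,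
    poissonPrimitive_add_two_pi, add_sub_cancel_left, div_self two_pi_pos.ne']

lemma exists_re_mul_cos_add_im_mul_sin_eq_of_integral_poisson_eq {z : ℂ} (hz : ‖z‖ < 1)
    {u v : ℝ} (huv : u < v) (h : ∫ t in u..v, poisson z t = ∫ t in u..v, poisson 0 t) :
    ∃ c ∈ Set.Ioo u v, z.re * cos c + z.im * sin c = ‖z‖ ^ 2 := by
  have hderiv (t : ℝ) :
      HasDerivAt (fun t => poissonPrimitive z t - t) (2 * π * poisson z t - 1) t :=
    (hasDerivAt_poissonPrimitive hz t).sub (hasDerivAt_id t)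
  have heq : poissonPrimitive z u - u = poissonPrimitive z v - v := by
    rw [integral_poisson hz, integral_poisson_zero, div_left_inj' two_pi_pos.ne'] at h
    linarith
  obtain ⟨c, hc, hc0⟩ := exists_hasDerivAt_eq_zero huv
    (continuous_iff_continuousAt.2 fun t => (hderiv t).continuousAt).continuousOn heq
    fun t _ => hderiv t
  exact ⟨c, hc, (two_pi_mul_poisson_eq_one_iff hz c).1 (sub_eq_zero.1 hc0)⟩

lemma mul_cos_midpoint_eq_mul_sin_midpoint {a b x y : ℝ} (hxy : x < y) (hyx : y < x + 2 * π)
    (h : a * cos x + b * sin x = a * cos y + b * sin y) :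
    b * cos ((x + y) / 2) = a * sin ((x + y) / 2) := by
  set m := (x + y) / 2
  set d := (y - x) / 2
  have hd : sin d ≠ 0 :=
    (sin_pos_of_pos_of_lt_pi (by simp only [d]; linarith) (by simp only [d]; linarith)).ne'
  rw [show x = m - d by simp only [m, d]; ring, show y = m + d by simp only [m, d]; ring] at h
  simp only [cos_sub, cos_add, sin_sub, sin_add] at h
  -- `h` now says `2 sin d (a sin m - b cos m) = 0`
  apply mul_left_cancel₀ hd
  linear_combination -h / 2

lemma eq_zero_of_mul_cos_add_mul_sin_eq_at_three {a b x y w : ℝ} (hxy : x < y) (hyw : y < w)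
    (hwx : w < x + 2 * π) (h₁ : a * cos x + b * sin x = a * cos y + b * sin y)
    (h₂ : a * cos y + b * sin y = a * cos w + b * sin w) : a = 0 ∧ b = 0 := by
  have k₁ := mul_cos_midpoint_eq_mul_sin_midpoint hxy (by linarith) h₁
  have k₂ := mul_cos_midpoint_eq_mul_sin_midpoint hyw (by linarith) h₂
  set m₁ := (x + y) / 2
  set m₂ := (y + w) / 2
  have hsin : sin (m₂ - m₁) ≠ 0 :=
    (sin_pos_of_pos_of_lt_pi (by simp only [m₁, m₂]; linarith)
      (by simp only [m₁, m₂]; linarith)).ne'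
  rw [sin_sub] at hsin
  constructor
  · apply (mul_eq_zero.1 _).resolve_right hsin
    linear_combination cos m₂ * k₁ - cos m₁ * k₂
  · apply (mul_eq_zero.1 _).resolve_right hsin
    linear_combination sin m₂ * k₁ - sin m₁ * k₂

lemma eq_zero_of_integral_poisson_eq_integral_poisson_zero {z : ℂ} (hz : ‖z‖ < 1)
    {u₁ u₂ u₃ u₄ : ℝ} (h₁₂ : u₁ < u₂) (h₂₃ : u₂ < u₃) (h₃₄ : u₃ < u₄) (h₄₁ : u₄ ≤ u₁ + 2 * π)
    (h₁ : ∫ t in u₁..u₂, poisson z t = ∫ t in u₁..u₂, poisson 0 t)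
    (h₂ : ∫ t in u₂..u₃, poisson z t = ∫ t in u₂..u₃, poisson 0 t)
    (h₃ : ∫ t in u₃..u₄, poisson z t = ∫ t in u₃..u₄, poisson 0 t) :
    z = 0 := by
  obtain ⟨c₁, hc₁, e₁⟩ := exists_re_mul_cos_add_im_mul_sin_eq_of_integral_poisson_eq hz h₁₂ h₁
  obtain ⟨c₂, hc₂, e₂⟩ := exists_re_mul_cos_add_im_mul_sin_eq_of_integral_poisson_eq hz h₂₃ h₂
  obtain ⟨c₃, hc₃, e₃⟩ := exists_re_mul_cos_add_im_mul_sin_eq_of_integral_poisson_eq hz h₃₄ h₃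
  obtain ⟨hre, him⟩ := eq_zero_of_mul_cos_add_mul_sin_eq_at_three (hc₁.2.trans hc₂.1)
    (hc₂.2.trans hc₃.1) (by linarith [hc₁.1, hc₃.2]) (e₁.trans e₂.symm) (e₂.trans e₃.symm)
  exact Complex.ext hre him

lemma StrictConvexOn.sum_mul_apply_div_eq_zero_iff {ι : Type*} {s : Finset ι} {f : ℝ → ℝ}
    (hf : StrictConvexOn ℝ (Set.Ioi 0) f) (hf1 : f 1 = 0) {p q : ι → ℝ}
    (hp : ∀ i ∈ s, 0 < p i) (hq : ∀ i ∈ s, 0 < q i)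
    (hps : ∑ i ∈ s, p i = 1) (hqs : ∑ i ∈ s, q i = 1) :
    ∑ i ∈ s, p i * f (q i / p i) = 0 ↔ ∀ i ∈ s, q i = p i := by
  have hmean : ∑ i ∈ s, p i • (q i / p i) = 1 := by
    rw [← hqs]
    exact Finset.sum_congr rfl fun i hi => mul_div_cancel₀ _ (hp i hi).ne'
  have := hf.map_sum_eq_iff hp hps fun i hi => div_pos (hq i hi) (hp i hi)
  rw [hmean, hf1, eq_comm] at this
  simp only [smul_eq_mul] at this
  rw [this]
  exact forall₂_congr fun i hi => div_eq_one_iff_eq (hp i hi).ne'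

lemma strictMonoOn_of_partition {n : ℕ} {θ : ℕ → ℝ} (hθ1 : -π < θ 1) (hθn : θ n ≤ π)
    (hmono : ∀ j, 1 ≤ j → j < n → θ j < θ (j + 1)) (hper : θ (n + 1) = θ 1 + 2 * π) :
    StrictMonoOn θ (Set.Icc 1 (n + 1)) := by
  refine strictMonoOn_of_lt_add_one Set.ordConnected_Icc fun j _ hj hj1 => ?_
  obtain hjn | rfl := (Nat.lt_or_eq_of_le (by simpa using hj1.2 : j ≤ n))
  · exact hmono j hj.1 hjn
  · linarith

/-- For a partition `−π < θ₁ < ⋯ < θ_n ≤ π` of the circle with `n ≥ 3`,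
`θ_{n+1} := θ₁ + 2π`, and `f` twice continuously differentiable on `(0,∞)` with
`f″ > 0` there and `f(1) = 0`, the reduced `f`-divergence distance satisfies
`d_f(z) = 0` iff `z = 0`; equivalently, if `φ_j(z) = (θ_{j+1} − θ_j)/(2π)` for all
`j = 1,…,n`, then `z = 0`. -/
theorem reduced_divergence_vanishes_iff
    (n : ℕ) (hn : 3 ≤ n) (θ : ℕ → ℝ)
    (hθ1 : -Real.pi < θ 1) (hθn : θ n ≤ Real.pi)
    (hmono : ∀ j, 1 ≤ j → j < n → θ j < θ (j + 1))
    (hper : θ (n + 1) = θ 1 + 2 * Real.pi)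
    (f : ℝ → ℝ) (hf1 : f 1 = 0)
    (hfC2 : ContDiffOn ℝ 2 f (Set.Ioi 0))
    (hf'' : ∀ x : ℝ, 0 < x → 0 < deriv (deriv f) x)
    (φ : ℕ → ℂ → ℝ)
    (hφ : ∀ j z, φ j z = ∫ t in (θ j)..(θ (j + 1)), poisson z t)
    (d : ℂ → ℝ)
    (hd : ∀ z, d z = ∑ j ∈ Finset.Icc 1 n, φ j 0 * f (φ j z / φ j 0)) :
    ∀ z : ℂ, ‖z‖ < 1 →
      ((d z = 0 ↔ z = 0) ∧
        ((∀ j ∈ Finset.Icc 1 n, φ j z = (θ (j + 1) - θ j) / (2 * Real.pi)) → z = 0)) := by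
  intro z hz
  have hθ := strictMonoOn_of_partition hθ1 hθn hmono hper
  have hstep (j : ℕ) (hj : j ∈ Finset.Icc 1 n) : θ j < θ (j + 1) := by
    rw [Finset.mem_Icc] at hj
    exact hθ ⟨hj.1, by omega⟩ ⟨by omega, by omega⟩ (by omega)
  have hφ0 (j : ℕ) : φ j 0 = (θ (j + 1) - θ j) / (2 * π) := by
    rw [hφ, integral_poisson_zero]
  have hinj : (∀ j ∈ Finset.Icc 1 n, φ j z = φ j 0) → z = 0 := by
    simp only [hφ]
    intro h
    have hmem (j : ℕ) (hj : 1 ≤ j ∧ j ≤ 3) : j ∈ Finset.Icc 1 n :=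
      Finset.mem_Icc.2 ⟨hj.1, by omega⟩
    exact eq_zero_of_integral_poisson_eq_integral_poisson_zero hz
      (hstep 1 (hmem 1 (by norm_num))) (hstep 2 (hmem 2 (by norm_num)))
      (hstep 3 (hmem 3 (by norm_num)))
      (hper ▸ hθ.monotoneOn (by simp; omega) (by simp) (by omega))
      (h 1 (hmem 1 (by norm_num))) (h 2 (hmem 2 (by norm_num))) (h 3 (hmem 3 (by norm_num)))
  have hconv : StrictConvexOn ℝ (Set.Ioi 0) f :=
    strictConvexOn_of_deriv2_pos (convex_Ioi 0) hfC2.continuousOn fun x hx => by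
      simpa using hf'' x (by simpa using hx)
  have hdiv := hconv.sum_mul_apply_div_eq_zero_iff hf1
    (fun j hj => (hφ0 j).symm ▸ div_pos (sub_pos.2 (hstep j hj)) two_pi_pos)
    (fun j hj => (hφ j z).symm ▸ integral_poisson_pos hz (hstep j hj))
    (by simp only [hφ]; exact sum_integral_poisson_eq_one (by simp) hper)
    (by simp only [hφ]; exact sum_integral_poisson_eq_one hz hper)
  refine ⟨⟨fun h => hinj (hdiv.1 (hd z ▸ h)), ?_⟩,
    fun h => hinj fun j hj => (h j hj).trans (hφ0 j).symm⟩
  rintro rfl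
  exact hd 0 ▸ hdiv.2 fun _ _ => rfl
end

section
/- Let z be a point of the open unit disk and θ ∈ ℝ, and set v = e^{iθ} − z. If u ∈ ℂ satisfies |u| = 1, u ≠ e^{iθ}, and u − z = s·(e^{iθ} − z) for some real number s (i.e., u lies on the line through z and e^{iθ}), then with w = u − z one has 1/conj(v) = −w/(1 − |z|²). -/
open ComplexConjugate

/-- Write `a = z + v` and `b = z + s • v`; subtracting the expansions of `‖a‖² = ‖b‖²` gives
`(s - 1) (2 ⟪z, v⟫ + (s + 1) ‖v‖²) = 0`, and `s ≠ 1` because `b ≠ a`. -/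
theorem mul_norm_sub_sq_eq_norm_sq_sub_norm_sq {E : Type*} [NormedAddCommGroup E]
    [InnerProductSpace ℝ E] {a b z : E} {s : ℝ} (hnorm : ‖b‖ = ‖a‖) (hab : b ≠ a)
    (hs : b - z = s • (a - z)) : s * ‖a - z‖ ^ 2 = ‖z‖ ^ 2 - ‖a‖ ^ 2 := by
  set v := a - z
  have ha : a = z + v := by simp [v]
  have hb : b = z + s • v := by rw [← hs]; abel
  have hs1 : s - 1 ≠ 0 := by
    rintro hs1
    apply hab
    rw [hb, ha, sub_eq_zero.mp hs1, one_smul]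
  have hexpand : ‖b‖ ^ 2 - ‖a‖ ^ 2 = (s - 1) * (2 * inner ℝ z v + (s + 1) * ‖v‖ ^ 2) := by
    rw [hb, ha, norm_add_sq_real, norm_add_sq_real, inner_smul_right, norm_smul,
      Real.norm_eq_abs, mul_pow, sq_abs]
    ring
  rw [hnorm, sub_self, zero_eq_mul] at hexpand
  have hinner := hexpand.resolve_left hs1
  rw [ha, norm_add_sq_real]
  linarith

theorem Complex.sub_mul_conj_sub_eq_norm_sq_sub_norm_sq {a b z : ℂ} {s : ℝ} (hnorm : ‖b‖ = ‖a‖)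
    (hab : b ≠ a) (hs : b - z = s * (a - z)) :
    (b - z) * conj (a - z) = ((‖z‖ ^ 2 - ‖a‖ ^ 2 : ℝ) : ℂ) := by
  rw [← Complex.real_smul] at hs
  rw [← mul_norm_sub_sq_eq_norm_sq_sub_norm_sq hnorm hab hs, hs, Complex.real_smul, mul_assoc,
    Complex.mul_conj']
  push_cast
  rfl

/-- **Lemma (intersecting chords).**  Let `z` be in the open unit disk, `θ ∈ ℝ`,
`v = e^{iθ} − z`.  If `u` is on the unit circle, `u ≠ e^{iθ}`, and `u` lies on the line
through `z` and `e^{iθ}` (i.e. `u − z = s·(e^{iθ} − z)` for some real `s`), then with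
`w = u − z` one has `1/conj(v) = −w/(1 − |z|²)`. -/
theorem one_div_conj_eq_neg_antipode_chord
    (z : ℂ) (hz : ‖z‖ < 1) (θ : ℝ) (u : ℂ)
    (hu : ‖u‖ = 1) (hune : u ≠ Complex.exp (θ * Complex.I))
    (hline : ∃ s : ℝ, u - z = (s : ℂ) * (Complex.exp (θ * Complex.I) - z)) :
    1 / (starRingEnd ℂ) (Complex.exp (θ * Complex.I) - z) =
      -(u - z) / ((1 : ℂ) - ((‖z‖ : ℝ) : ℂ) ^ 2) := by
  obtain ⟨s, hs⟩ := hline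
  set e := Complex.exp (θ * Complex.I)
  have he : ‖e‖ = 1 := Complex.norm_exp_ofReal_mul_I θ
  have hchord := Complex.sub_mul_conj_sub_eq_norm_sq_sub_norm_sq (hu.trans he.symm) hune hs
  rw [he] at hchord
  have hv : conj (e - z) ≠ 0 := by
    rw [map_ne_zero, sub_ne_zero]
    rintro rfl
    exact hz.ne he
  have hdisk : (1 : ℂ) - ((‖z‖ : ℝ) : ℂ) ^ 2 ≠ 0 := by
    rw [← Complex.ofReal_pow, ← Complex.ofReal_one, ← Complex.ofReal_sub, Complex.ofReal_ne_zero,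
      sub_ne_zero]
    exact (pow_lt_one₀ (norm_nonneg z) hz two_ne_zero).ne'
  rw [div_eq_div_iff hv hdisk]
  push_cast at hchord
  linear_combination hchord
end

section
/- Let a < b be real numbers with b − a ≤ 2π, let c = (a + b)/2, and let w : [a,b] → ℝ be integrable and monotone nondecreasing. Then ∫_a^b w(ψ)·sin(c − ψ) dψ ≤ 0, and equality holds if and only if w is almost everywhere constant on [a,b]. -/
/-!
The reflection `ψ ↦ a + b - ψ` about `c` changes the sign of `sin (c - ψ)`, so the integral is
`-½ ∫_a^b (w (a + b - ψ) - w ψ) sin (c - ψ) dψ`. Because `b - a ≤ 2π`, the two factors of this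
integrand have the same sign on either side of `c` by monotonicity, whence the inequality. If the
integral vanishes, then `w ψ = w (a + b - ψ)` for almost every `ψ ∈ (a, c)`, so `w` is constant on
`[ψ, a + b - ψ]` for such `ψ`, which come arbitrarily close to `a`.
-/

open MeasureTheory Set Real

theorem IntervalIntegrable.comp_reflect {E : Type*} [NormedAddCommGroup E] {a b : ℝ} {f : ℝ → E}
    (hf : IntervalIntegrable f volume a b) :
    IntervalIntegrable (fun x => f (a + b - x)) volume a b := by
  simpa using (hf.comp_sub_left (a + b)).symm

theorem integral_mul_eq_neg_half_integral_reflect_sub_mul {a b : ℝ} {f g : ℝ → ℝ}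
    (hf : IntervalIntegrable f volume a b) (hg : Continuous g)
    (hodd : ∀ x, g (a + b - x) = -g x) :
    ∫ x in a..b, f x * g x = -(∫ x in a..b, (f (a + b - x) - f x) * g x) / 2 := by
  have hrefl : ∫ x in a..b, f x * g x = -∫ x in a..b, f (a + b - x) * g x := by
    have h := intervalIntegral.integral_comp_sub_left (a := a) (b := b) (fun x => f x * g x) (a + b)
    simp only [add_sub_cancel_right, add_sub_cancel_left, hodd] at h
    simp [← h]
  simp only [sub_mul]
  rw [intervalIntegral.integral_sub (hf.comp_reflect.mul_continuousOn hg.continuousOn)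
    (hf.mul_continuousOn hg.continuousOn)]
  linarith

theorem MonotoneOn.eq_of_le_of_le_of_eq {α β : Type*} [Preorder α] [PartialOrder β]
    {s : Set α} {w : α → β} (hw : MonotoneOn w s) {p q x : α} (hp : p ∈ s) (hq : q ∈ s) (hx : x ∈ s) (hpx : p ≤ x) (hxq : x ≤ q)
    (hpq : w p = w q) : w x = w p :=
  le_antisymm (hpq ▸ hw hx hq hxq) (hw hp hx hpx)

namespace MonotoneOn

variable {a b : ℝ} {w : ℝ → ℝ}

theorem le_reflect (hw : MonotoneOn w (Icc a b)) {x : ℝ} (hx : x ∈ Icc a b)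
    (hxc : x ≤ (a + b) / 2) : w x ≤ w (a + b - x) :=
  hw hx ⟨by linarith [hx.2], by linarith [hx.1]⟩ (by linarith)

theorem reflect_sub_mul_sin_nonneg (hw : MonotoneOn w (Icc a b)) (hlen : b - a ≤ 2 * π)
    {x : ℝ} (hx : x ∈ Icc a b) : 0 ≤ (w (a + b - x) - w x) * sin ((a + b) / 2 - x) := by
  rcases le_total x ((a + b) / 2) with hxc | hcx
  · refine mul_nonneg (sub_nonneg.2 (hw.le_reflect hx hxc)) ?_
    exact sin_nonneg_of_nonneg_of_le_pi (by linarith) (by linarith [hx.1])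
  · have hrx : a + b - x ∈ Icc a b := ⟨by linarith [hx.2], by linarith [hx.1]⟩
    have hle : w (a + b - x) ≤ w x := by
      simpa using hw.le_reflect hrx (by linarith)
    refine mul_nonneg_of_nonpos_of_nonpos (sub_nonpos.2 hle) ?_
    exact sin_nonpos_of_nonpos_of_neg_pi_le (by linarith) (by linarith [hx.2])

theorem ae_eq_reflect_of_integral_reflect_sub_mul_sin_eq_zero (hw : MonotoneOn w (Icc a b))
    (hab : a ≤ b) (hlen : b - a ≤ 2 * π) (hwi : IntervalIntegrable w volume a b)
    (hzero : ∫ x in a..b, (w (a + b - x) - w x) * sin ((a + b) / 2 - x) = 0) :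
    ∀ᵐ x ∂volume.restrict (Ioo a ((a + b) / 2)), w x = w (a + b - x) := by
  have hq_int : IntervalIntegrable (fun x => (w (a + b - x) - w x) * sin ((a + b) / 2 - x))
      volume a b := (hwi.comp_reflect.sub hwi).mul_continuousOn (by fun_prop)
  have hq_nonneg : 0 ≤ᵐ[volume.restrict (Ioc a b)]
      fun x => (w (a + b - x) - w x) * sin ((a + b) / 2 - x) :=
    ae_restrict_of_forall_mem measurableSet_Ioc fun x hx =>
      hw.reflect_sub_mul_sin_nonneg hlen (Ioc_subset_Icc_self hx)
  rw [intervalIntegral.integral_eq_zero_iff_of_le_of_nonneg_ae hab hq_nonneg hq_int] at hzero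
  filter_upwards [ae_restrict_of_ae_restrict_of_subset (Ioo_subset_Ioc_self.trans
    (Ioc_subset_Ioc_right (by linarith))) hzero, ae_restrict_mem measurableSet_Ioo] with x hx hx_mem
  have hsin_pos : 0 < sin ((a + b) / 2 - x) :=
    sin_pos_of_pos_of_lt_pi (by linarith [hx_mem.2]) (by linarith [hx_mem.1])
  simpa [hsin_pos.ne', sub_eq_zero, eq_comm] using hx

theorem ae_eq_midpoint_of_ae_eq_reflect (hw : MonotoneOn w (Icc a b))
    (hrefl : ∀ᵐ x ∂volume.restrict (Ioo a ((a + b) / 2)), w x = w (a + b - x)) :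
    ∀ᵐ x ∂volume.restrict (Icc a b), w x = w ((a + b) / 2) := by
  rw [← Measure.restrict_congr_set Ioo_ae_eq_Icc]
  refine ae_restrict_of_forall_mem measurableSet_Ioo fun x hx => ?_
  set m := min x (a + b - x)
  have ham : a < m := lt_min hx.1 (by linarith [hx.2])
  have hmc : m ≤ (a + b) / 2 := by
    linarith [min_le_left x (a + b - x), min_le_right x (a + b - x)]
  have hpos : volume.restrict (Ioo a m) ≠ 0 := by
    simp [Measure.restrict_eq_zero, ham]
  obtain ⟨y, hy, hwy⟩ : ∃ y ∈ Ioo a m, w y = w (a + b - y) := by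
    have := ae_neBot.2 hpos
    exact ((ae_restrict_mem measurableSet_Ioo).and
      (ae_restrict_of_ae_restrict_of_subset (Ioo_subset_Ioo_right hmc) hrefl)).exists
  have hyc : y ≤ (a + b) / 2 := (hy.2.trans_le hmc).le
  have hy_mem : y ∈ Icc a b := ⟨hy.1.le, by linarith [hy.1]⟩
  have hry_mem : a + b - y ∈ Icc a b := ⟨by linarith, by linarith [hy.1]⟩
  have hyx : y ≤ x := (hy.2.trans_le (min_le_left _ _)).le
  have hxy : x ≤ a + b - y := by linarith [hy.2.trans_le (min_le_right x (a + b - x))]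
  rw [hw.eq_of_le_of_le_of_eq hy_mem hry_mem ⟨hx.1.le, hx.2.le⟩ hyx hxy hwy,
    hw.eq_of_le_of_le_of_eq hy_mem hry_mem ⟨by linarith [hy.1], by linarith [hy.1]⟩ hyc
      (by linarith) hwy]

end MonotoneOn

/-- Let `a < b` with `b − a ≤ 2π`, `c = (a+b)/2`, and let `w` be integrable and monotone
nondecreasing on `[a,b]`.  Then `∫_a^b w(ψ)·sin(c − ψ) dψ ≤ 0`, with equality iff `w` is
almost everywhere constant on `[a,b]`. -/
theorem monotone_sin_integral_nonpos
    (a b : ℝ) (hab : a < b) (hlen : b - a ≤ 2 * Real.pi)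
    (c : ℝ) (hc : c = (a + b) / 2)
    (w : ℝ → ℝ)
    (hint : IntegrableOn w (Set.Icc a b))
    (hmono : MonotoneOn w (Set.Icc a b)) :
    (∫ ψ in a..b, w ψ * Real.sin (c - ψ)) ≤ 0 ∧
    ((∫ ψ in a..b, w ψ * Real.sin (c - ψ)) = 0 ↔
      ∃ k : ℝ, ∀ᵐ ψ ∂(volume.restrict (Set.Icc a b)), w ψ = k) := by
  subst hc
  have hsin : Continuous fun ψ => sin ((a + b) / 2 - ψ) := by fun_prop
  have hodd (ψ : ℝ) : sin ((a + b) / 2 - (a + b - ψ)) = -sin ((a + b) / 2 - ψ) := by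
    rw [← sin_neg]; ring_nf
  have hw : IntervalIntegrable w volume a b :=
    (intervalIntegrable_iff_integrableOn_Icc_of_le hab.le).2 hint
  have hfold {f : ℝ → ℝ} (hf : IntervalIntegrable f volume a b) :=
    integral_mul_eq_neg_half_integral_reflect_sub_mul hf hsin hodd
  refine ⟨?_, fun hzero => ⟨_, hmono.ae_eq_midpoint_of_ae_eq_reflect ?_⟩, ?_⟩
  · rw [hfold hw]
    linarith [intervalIntegral.integral_nonneg (μ := volume) hab.le fun ψ hψ =>
      hmono.reflect_sub_mul_sin_nonneg hlen hψ]
  · rw [hfold hw, neg_div, neg_eq_zero, div_eq_zero_iff, or_iff_left two_ne_zero] at hzero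
    exact hmono.ae_eq_reflect_of_integral_reflect_sub_mul_sin_eq_zero hab.le hlen hw hzero
  · rintro ⟨k, hk⟩
    have hk' : ∀ᵐ ψ, ψ ∈ uIoc a b → w ψ * sin ((a + b) / 2 - ψ) = k * sin ((a + b) / 2 - ψ) := by
      filter_upwards [(ae_restrict_iff' measurableSet_Icc).1 hk] with ψ hψ hψ_mem
      rw [hψ (Ioc_subset_Icc_self (uIoc_of_le hab.le ▸ hψ_mem))]
    rw [intervalIntegral.integral_congr_ae hk', hfold intervalIntegrable_const]
    simp
end
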